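/- arXiv:1501.00616 — 6 statements merged into one kernel-verified Lean document; each statement's English description precedes it below -/
import Mathlib

section
/- Suppose that equations (E1) and (E2) hold at every point of U with r ≠ 0. Then at every such point one has the conservation law ∂_t( r e^{β} 𝐞 ) = ∂_r( r e^{α} 𝐦 ) (note r e^{α} 𝐦 = r e^{−β} ∂_t φ ∂_r φ); that is, the energy current P_T := −e^{−α} 𝐞 ∂_t + e^{−β} 𝐦 ∂_r is divergence free. -/
open Real

/-- Partial derivative in the time variable `t`. -/
noncomputable def pdt (f : ℝ → ℝ → ℝ) (t r : ℝ) : ℝ := deriv (fun t' => f t' r) t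

/-- Partial derivative in the radial variable `r`. -/
noncomputable def pdr (f : ℝ → ℝ → ℝ) (t r : ℝ) : ℝ := deriv (fun r' => f t r') r

/-- The energy density 𝐞. -/
noncomputable def eDen (g : ℝ → ℝ) (α β φ : ℝ → ℝ → ℝ) (t r : ℝ) : ℝ :=
  (1 / 2) * (exp (-(2 * α t r)) * (pdt φ t r) ^ 2 + exp (-(2 * β t r)) * (pdr φ t r) ^ 2
    + (g (φ t r)) ^ 2 / r ^ 2)

/-- The momentum density 𝐦. -/
noncomputable def mDen (α β φ : ℝ → ℝ → ℝ) (t r : ℝ) : ℝ :=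
  exp (-(α t r + β t r)) * pdt φ t r * pdr φ t r

/-! By (E1) and (E2), `r e^β 𝐞 = ∂_r ψ` and `r e^α 𝐦 = ∂_t ψ` for the potential
`ψ = -e^{-β} / κ`, so the conservation law is the symmetry of the mixed second derivatives
of `ψ`. -/

open Filter Topology

section Slices

variable {t r : ℝ}

lemma HasFDerivAt.hasDerivAt_slice_fst {F : ℝ × ℝ → ℝ} {F' : ℝ × ℝ →L[ℝ] ℝ}
    (h : HasFDerivAt F F' (t, r)) : HasDerivAt (fun t' => F (t', r)) (F' (1, 0)) t :=
  h.comp_hasDerivAt t ((hasDerivAt_id t).prodMk (hasDerivAt_const t r))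

lemma HasFDerivAt.hasDerivAt_slice_snd {F : ℝ × ℝ → ℝ} {F' : ℝ × ℝ →L[ℝ] ℝ}
    (h : HasFDerivAt F F' (t, r)) : HasDerivAt (fun r' => F (t, r')) (F' (0, 1)) r :=
  h.comp_hasDerivAt r ((hasDerivAt_const r t).prodMk (hasDerivAt_id r))

variable {f f₁ : ℝ → ℝ → ℝ}

lemma pdt_congr (h : ∀ᶠ q in 𝓝 (t, r), f q.1 q.2 = f₁ q.1 q.2) : pdt f t r = pdt f₁ t r :=
  EventuallyEq.deriv_eq <|
    (continuous_id.prodMk continuous_const).continuousAt.tendsto.eventually h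

lemma pdr_congr (h : ∀ᶠ q in 𝓝 (t, r), f q.1 q.2 = f₁ q.1 q.2) : pdr f t r = pdr f₁ t r :=
  EventuallyEq.deriv_eq <|
    (continuous_const.prodMk continuous_id).continuousAt.tendsto.eventually h

lemma pdt_neg_exp_neg_div (c : ℝ) (h : DifferentiableAt ℝ (fun t' => f t' r) t) :
    pdt (fun t r => -exp (-f t r) / c) t r = exp (-f t r) * pdt f t r / c := by
  have hd : HasDerivAt (fun t' => -exp (-f t' r) / c) (-(exp (-f t r) * -pdt f t r) / c) t :=
    h.hasDerivAt.neg.exp.neg.div_const c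
  rw [pdt, hd.deriv]
  ring

lemma pdr_neg_exp_neg_div (c : ℝ) (h : DifferentiableAt ℝ (fun r' => f t r') r) :
    pdr (fun t r => -exp (-f t r) / c) t r = exp (-f t r) * pdr f t r / c := by
  have hd : HasDerivAt (fun r' => -exp (-f t r') / c) (-(exp (-f t r) * -pdr f t r) / c) r :=
    h.hasDerivAt.neg.exp.neg.div_const c
  rw [pdr, hd.deriv]
  ring

lemma pdt_pdr_comm {U : Set (ℝ × ℝ)} (hU : IsOpen U)
    (hf : ContDiffOn ℝ 2 (fun q : ℝ × ℝ => f q.1 q.2) U) (hp : (t, r) ∈ U) :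
    pdt (pdr f) t r = pdr (pdt f) t r := by
  set F : ℝ × ℝ → ℝ := fun q => f q.1 q.2
  have hF : ∀ q ∈ U, HasFDerivAt F (fderiv ℝ F q) q := fun q hq =>
    ((hf.contDiffAt (hU.mem_nhds hq)).differentiableAt (by norm_num)).hasFDerivAt
  have hF₂ : HasFDerivAt (fderiv ℝ F) (fderiv ℝ (fderiv ℝ F) (t, r)) (t, r) :=
    (((hf.contDiffAt (hU.mem_nhds hp)).fderiv_right (m := 1) (by norm_num)).differentiableAt
      (by norm_num)).hasFDerivAt
  have hpdr : ∀ᶠ q in 𝓝 (t, r), pdr f q.1 q.2 = fderiv ℝ F q (0, 1) := by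
    filter_upwards [hU.mem_nhds hp] with q hq
    exact (hF q hq).hasDerivAt_slice_snd.deriv
  have hpdt : ∀ᶠ q in 𝓝 (t, r), pdt f q.1 q.2 = fderiv ℝ F q (1, 0) := by
    filter_upwards [hU.mem_nhds hp] with q hq
    exact (hF q hq).hasDerivAt_slice_fst.deriv
  have happly (v : ℝ × ℝ) : HasFDerivAt (fun q => fderiv ℝ F q v)
      ((ContinuousLinearMap.apply ℝ ℝ v).comp (fderiv ℝ (fderiv ℝ F) (t, r))) (t, r) :=
    (ContinuousLinearMap.apply ℝ ℝ v).hasFDerivAt.comp (t, r) hF₂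
  rw [pdt_congr (f₁ := fun t r => fderiv ℝ F (t, r) (0, 1)) hpdr,
    pdr_congr (f₁ := fun t r => fderiv ℝ F (t, r) (1, 0)) hpdt, pdt, pdr,
    (happly (0, 1)).hasDerivAt_slice_fst.deriv,
    (happly (1, 0)).hasDerivAt_slice_snd.deriv]
  exact ((hf.contDiffAt (hU.mem_nhds hp)).isSymmSndFDerivAt (by norm_num)).eq _ _

end Slices

section Densities

variable {κ t r : ℝ} {g : ℝ → ℝ} {α β φ : ℝ → ℝ → ℝ}

lemma mul_exp_mul_eDen_eq (hκ : κ ≠ 0)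
    (hE1 : pdr β t r = (κ / 2) * r * exp (2 * β t r) *
      (exp (-(2 * α t r)) * (pdt φ t r) ^ 2 + exp (-(2 * β t r)) * (pdr φ t r) ^ 2
        + (g (φ t r)) ^ 2 / r ^ 2)) :
    r * exp (β t r) * eDen g α β φ t r = exp (-β t r) * pdr β t r / κ := by
  have hexp : exp (-β t r) * exp (2 * β t r) = exp (β t r) := by
    rw [← exp_add]; ring_nf
  rw [hE1, eDen, ← hexp]
  field_simp

lemma mul_exp_mul_mDen_eq (hκ : κ ≠ 0) (hE2 : pdt β t r = κ * r * pdt φ t r * pdr φ t r) :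
    r * exp (α t r) * mDen α β φ t r = exp (-β t r) * pdt β t r / κ := by
  have hexp : exp (α t r) * exp (-(α t r + β t r)) = exp (-β t r) := by
    rw [← exp_add]; ring_nf
  rw [hE2, mDen, ← hexp]
  field_simp

end Densities

theorem energy_current_divergence_free_general
    (κ : ℝ) (hκ : 0 < κ)
    (g : ℝ → ℝ)
    (U : Set (ℝ × ℝ)) (hU : IsOpen U)
    (α β φ : ℝ → ℝ → ℝ)
    (hβ : ContDiffOn ℝ 2 (fun p : ℝ × ℝ => β p.1 p.2) U)
    (hE1 : ∀ t r : ℝ, (t, r) ∈ U → r ≠ 0 →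
      pdr β t r = (κ / 2) * r * exp (2 * β t r) *
        (exp (-(2 * α t r)) * (pdt φ t r) ^ 2 + exp (-(2 * β t r)) * (pdr φ t r) ^ 2
          + (g (φ t r)) ^ 2 / r ^ 2))
    (hE2 : ∀ t r : ℝ, (t, r) ∈ U → r ≠ 0 →
      pdt β t r = κ * r * pdt φ t r * pdr φ t r) :
    ∀ t r : ℝ, (t, r) ∈ U → r ≠ 0 →
      pdt (fun t' r' => r' * exp (β t' r') * eDen g α β φ t' r') t r
        = pdr (fun t' r' => r' * exp (α t' r') * mDen α β φ t' r') t r := by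
  intro t r hp hr
  have hβd : ∀ q ∈ U, HasFDerivAt (fun p : ℝ × ℝ => β p.1 p.2) _ q := fun q hq =>
    ((hβ.contDiffAt (hU.mem_nhds hq)).differentiableAt (by norm_num)).hasFDerivAt
  have hV : ∀ᶠ q : ℝ × ℝ in 𝓝 (t, r), q ∈ U ∧ q.2 ≠ 0 :=
    Eventually.and (hU.mem_nhds hp)
      ((isOpen_ne_fun continuous_snd continuous_const).mem_nhds hr)
  have hlhs : ∀ᶠ q : ℝ × ℝ in 𝓝 (t, r), q.2 * exp (β q.1 q.2) * eDen g α β φ q.1 q.2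
      = pdr (fun t r => -exp (-β t r) / κ) q.1 q.2 := by
    filter_upwards [hV] with ⟨t', r'⟩ ⟨hq, hr'⟩
    rw [pdr_neg_exp_neg_div κ (hβd _ hq).hasDerivAt_slice_snd.differentiableAt]
    exact mul_exp_mul_eDen_eq hκ.ne' (hE1 t' r' hq hr')
  have hrhs : ∀ᶠ q : ℝ × ℝ in 𝓝 (t, r), q.2 * exp (α q.1 q.2) * mDen α β φ q.1 q.2
      = pdt (fun t r => -exp (-β t r) / κ) q.1 q.2 := by
    filter_upwards [hV] with ⟨t', r'⟩ ⟨hq, hr'⟩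
    rw [pdt_neg_exp_neg_div κ (hβd _ hq).hasDerivAt_slice_fst.differentiableAt]
    exact mul_exp_mul_mDen_eq hκ.ne' (hE2 t' r' hq hr')
  rw [pdt_congr hlhs, pdr_congr hrhs]
  exact pdt_pdr_comm hU ((hβ.neg.exp.neg).div_const κ) hp

/-- If the Einstein equations (E1) and (E2) hold at every point of `U` with `r ≠ 0`, then the
conservation law `∂_t (r e^β 𝐞) = ∂_r (r e^α 𝐦)` holds at every such point, i.e. the energy
current `P_T = −e^{−α} 𝐞 ∂_t + e^{−β} 𝐦 ∂_r` is divergence free. -/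
theorem energy_current_divergence_free
    (κ : ℝ) (hκ : 0 < κ)
    (g : ℝ → ℝ) (hg : ContDiff ℝ 1 g)
    (U : Set (ℝ × ℝ)) (hU : IsOpen U)
    (α β φ : ℝ → ℝ → ℝ)
    (hα : ContDiffOn ℝ 2 (fun p : ℝ × ℝ => α p.1 p.2) U)
    (hβ : ContDiffOn ℝ 2 (fun p : ℝ × ℝ => β p.1 p.2) U)
    (hφ : ContDiffOn ℝ 2 (fun p : ℝ × ℝ => φ p.1 p.2) U)
    (hE1 : ∀ t r : ℝ, (t, r) ∈ U → r ≠ 0 →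
      pdr β t r = (κ / 2) * r * exp (2 * β t r) *
        (exp (-(2 * α t r)) * (pdt φ t r) ^ 2 + exp (-(2 * β t r)) * (pdr φ t r) ^ 2
          + (g (φ t r)) ^ 2 / r ^ 2))
    (hE2 : ∀ t r : ℝ, (t, r) ∈ U → r ≠ 0 →
      pdt β t r = κ * r * pdt φ t r * pdr φ t r) :
    ∀ t r : ℝ, (t, r) ∈ U → r ≠ 0 →
      pdt (fun t' r' => r' * exp (β t' r') * eDen g α β φ t' r') t r
        = pdr (fun t' r' => r' * exp (α t' r') * mDen α β φ t' r') t r :=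
  energy_current_divergence_free_general κ hκ g U hU α β φ hβ hE1 hE2
end

section
/- Let κ > 0, R > 0, and let P, Q, G : [0,R] → ℝ be continuous and nonnegative. Let β, α : [0,R] → ℝ be C¹ with β(0) = α(0) = 0, β′(r) = (κ/2) r e^{2β(r)}(P(r)+Q(r)+G(r)) and α′(r) = (κ/2) r e^{2β(r)}(P(r)+Q(r)−G(r)) for all r ∈ [0,R]. Then for every r ∈ [0,R]: (i) e^{−β(r)} = 1 − (κ/2)∫_0^r s e^{β(s)}(P(s)+Q(s)+G(s)) ds; (ii) β is nondecreasing, so 0 ≤ β(r) ≤ β(R); (iii) −(κ/2)∫_0^r s e^{2β(s)} G(s) ds ≤ α(r) ≤ (κ/2)∫_0^r s e^{2β(s)}(P(s)+Q(s)) ds. -/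
/-!
Since `(e^{-β})' = -e^{-β} β' = -(κ/2) r e^{β} (P+Q+G)`, integrating from the axis gives the identity
for `e^{-β}`. The integrand of `β'` is nonnegative, so `β` is nondecreasing from `β(0) = 0`. Finally
`α' = (κ/2) r e^{2β} (P+Q-G)` lies between `-(κ/2) r e^{2β} G` and `(κ/2) r e^{2β} (P+Q)`, and
integrating these pointwise bounds from `α(0) = 0` bounds `α`.
-/

open Real Set intervalIntegral

section IccDerivative

variable {f f' g : ℝ → ℝ} {a b : ℝ}

theorem integral_eq_sub_of_hasDerivWithinAt_Icc (hab : a ≤ b)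
    (hf : ∀ x ∈ Icc a b, HasDerivWithinAt f (f' x) (Icc a b) x) (hf' : ContinuousOn f' (Icc a b)) :
    ∫ x in a..b, f' x = f b - f a :=
  integral_eq_sub_of_hasDerivAt_of_le hab (HasDerivWithinAt.continuousOn hf)
    (fun x hx => (hf x (Ioo_subset_Icc_self hx)).hasDerivAt (Icc_mem_nhds hx.1 hx.2))
    (hf'.intervalIntegrable_of_Icc hab)

theorem sub_le_integral_of_hasDerivWithinAt_Icc (hab : a ≤ b)
    (hf : ∀ x ∈ Icc a b, HasDerivWithinAt f (f' x) (Icc a b) x) (hg : ContinuousOn g (Icc a b))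
    (hf'g : ∀ x ∈ Icc a b, f' x ≤ g x) :
    f b - f a ≤ ∫ x in a..b, g x :=
  sub_le_integral_of_hasDeriv_right_of_le hab (HasDerivWithinAt.continuousOn hf)
    (fun x hx => ((hf x (Ioo_subset_Icc_self hx)).hasDerivAt
      (Icc_mem_nhds hx.1 hx.2)).hasDerivWithinAt)
    (hg.integrableOn_Icc) (fun x hx => hf'g x (Ioo_subset_Icc_self hx))

theorem integral_le_sub_of_hasDerivWithinAt_Icc (hab : a ≤ b)
    (hf : ∀ x ∈ Icc a b, HasDerivWithinAt f (f' x) (Icc a b) x) (hg : ContinuousOn g (Icc a b))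
    (hgf' : ∀ x ∈ Icc a b, g x ≤ f' x) :
    ∫ x in a..b, g x ≤ f b - f a :=
  integral_le_sub_of_hasDeriv_right_of_le hab (HasDerivWithinAt.continuousOn hf)
    (fun x hx => ((hf x (Ioo_subset_Icc_self hx)).hasDerivAt
      (Icc_mem_nhds hx.1 hx.2)).hasDerivWithinAt)
    (hg.integrableOn_Icc) (fun x hx => hgf' x (Ioo_subset_Icc_self hx))

end IccDerivative

section MetricCoefficients

variable {κ r : ℝ} {β : ℝ → ℝ}

theorem exp_neg_eq_one_sub_integral_of_hasDerivWithinAt {S : ℝ → ℝ} (hr : 0 ≤ r) (hβ0 : β 0 = 0)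
    (hS : ContinuousOn S (Icc 0 r))
    (hβ' : ∀ s ∈ Icc 0 r, HasDerivWithinAt β (κ / 2 * s * exp (2 * β s) * S s) (Icc 0 r) s) :
    exp (-β r) = 1 - κ / 2 * ∫ s in (0:ℝ)..r, s * exp (β s) * S s := by
  have hderiv : ∀ s ∈ Icc 0 r, HasDerivWithinAt (fun y => exp (-β y))
      (-(κ / 2 * (s * exp (β s) * S s))) (Icc 0 r) s := by
    intro s hs
    refine (hβ' s hs).neg.exp.congr_deriv ?_
    rw [Pi.neg_apply, show exp (β s) = exp (-β s) * exp (2 * β s) by rw [← exp_add]; ring_nf]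
    ring
  have hβc : ContinuousOn β (Icc 0 r) := HasDerivWithinAt.continuousOn hβ'
  have hcont : ContinuousOn (fun s => -(κ / 2 * (s * exp (β s) * S s))) (Icc 0 r) := by
    fun_prop
  have hftc := integral_eq_sub_of_hasDerivWithinAt_Icc hr hderiv hcont
  rw [integral_neg, integral_const_mul, hβ0, neg_zero, exp_zero] at hftc
  linarith

theorem integral_bounds_of_hasDerivWithinAt_sub {α F G : ℝ → ℝ} (hκ : 0 ≤ κ) (hr : 0 ≤ r)
    (hα0 : α 0 = 0) (hβ : ContinuousOn β (Icc 0 r)) (hF : ContinuousOn F (Icc 0 r))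
    (hG : ContinuousOn G (Icc 0 r)) (hFnn : ∀ s ∈ Icc 0 r, 0 ≤ F s)
    (hGnn : ∀ s ∈ Icc 0 r, 0 ≤ G s)
    (hα' : ∀ s ∈ Icc 0 r,
      HasDerivWithinAt α (κ / 2 * s * exp (2 * β s) * (F s - G s)) (Icc 0 r) s) :
    -(κ / 2 * ∫ s in (0:ℝ)..r, s * exp (2 * β s) * G s) ≤ α r
      ∧ α r ≤ κ / 2 * ∫ s in (0:ℝ)..r, s * exp (2 * β s) * F s := by
  have hw : ∀ s ∈ Icc 0 r, 0 ≤ κ / 2 * s * exp (2 * β s) := fun s hs =>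
    mul_nonneg (mul_nonneg (div_nonneg hκ zero_le_two) hs.1) (exp_pos _).le
  constructor
  · have hlow := integral_le_sub_of_hasDerivWithinAt_Icc hr hα'
      (g := fun s => -(κ / 2 * (s * exp (2 * β s) * G s))) (by fun_prop)
      (fun s hs => by linear_combination mul_nonneg (hw s hs) (hFnn s hs))
    rwa [integral_neg, integral_const_mul, hα0, sub_zero] at hlow
  · have hup := sub_le_integral_of_hasDerivWithinAt_Icc hr hα'
      (g := fun s => κ / 2 * (s * exp (2 * β s) * F s)) (by fun_prop)
      (fun s hs => by linear_combination mul_nonneg (hw s hs) (hGnn s hs))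
    rwa [integral_const_mul, hα0, sub_zero] at hup

end MetricCoefficients

theorem metric_coefficient_bounds_general
    (κ R : ℝ) (hκ : 0 < κ)
    (P Q G : ℝ → ℝ)
    (hPc : ContinuousOn P (Set.Icc 0 R))
    (hQc : ContinuousOn Q (Set.Icc 0 R))
    (hGc : ContinuousOn G (Set.Icc 0 R))
    (hPnn : ∀ r ∈ Set.Icc (0:ℝ) R, 0 ≤ P r)
    (hQnn : ∀ r ∈ Set.Icc (0:ℝ) R, 0 ≤ Q r)
    (hGnn : ∀ r ∈ Set.Icc (0:ℝ) R, 0 ≤ G r)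
    (β α : ℝ → ℝ)
    (hβ0 : β 0 = 0) (hα0 : α 0 = 0)
    (hβ' : ∀ r ∈ Set.Icc (0:ℝ) R,
      HasDerivWithinAt β ((κ / 2) * r * exp (2 * β r) * (P r + Q r + G r)) (Set.Icc 0 R) r)
    (hα' : ∀ r ∈ Set.Icc (0:ℝ) R,
      HasDerivWithinAt α ((κ / 2) * r * exp (2 * β r) * (P r + Q r - G r)) (Set.Icc 0 R) r) :
    ∀ r ∈ Set.Icc (0:ℝ) R,
      (exp (-β r) = 1 - (κ / 2) * ∫ s in (0:ℝ)..r, s * exp (β s) * (P s + Q s + G s))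
      ∧ (MonotoneOn β (Set.Icc 0 R) ∧ 0 ≤ β r ∧ β r ≤ β R)
      ∧ (-((κ / 2) * ∫ s in (0:ℝ)..r, s * exp (2 * β s) * G s) ≤ α r
          ∧ α r ≤ (κ / 2) * ∫ s in (0:ℝ)..r, s * exp (2 * β s) * (P s + Q s)) := by
  have hβ'_nonneg : ∀ x ∈ Icc 0 R, 0 ≤ κ / 2 * x * exp (2 * β x) * (P x + Q x + G x) :=
    fun x hx => mul_nonneg (mul_nonneg (mul_nonneg (half_pos hκ).le hx.1) (exp_pos _).le)
      (add_nonneg (add_nonneg (hPnn x hx) (hQnn x hx)) (hGnn x hx))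
  have hmono : MonotoneOn β (Icc 0 R) :=
    monotoneOn_of_hasDerivWithinAt_nonneg (convex_Icc 0 R) (HasDerivWithinAt.continuousOn hβ')
      (fun x hx => (hβ' x (interior_subset hx)).mono interior_subset)
      (fun x hx => hβ'_nonneg x (interior_subset hx))
  intro r hr
  have hsub : Icc 0 r ⊆ Icc 0 R := Icc_subset_Icc_right hr.2
  have h0 : (0:ℝ) ∈ Icc 0 R := ⟨le_rfl, hr.1.trans hr.2⟩
  refine ⟨exp_neg_eq_one_sub_integral_of_hasDerivWithinAt hr.1 hβ0
      (((hPc.add hQc).add hGc).mono hsub) fun s hs => (hβ' s (hsub hs)).mono hsub,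
    ⟨hmono, hβ0 ▸ hmono h0 hr hr.1, hmono hr ⟨h0.2, le_rfl⟩ hr.2⟩,
    integral_bounds_of_hasDerivWithinAt_sub hκ.le hr.1 hα0
      ((HasDerivWithinAt.continuousOn hβ').mono hsub) ((hPc.add hQc).mono hsub) (hGc.mono hsub)
      (fun s hs => add_nonneg (hPnn s (hsub hs)) (hQnn s (hsub hs))) (fun s hs => hGnn s (hsub hs))
      fun s hs => (hα' s (hsub hs)).mono hsub⟩

/-- Uniform bounds on the metric coefficients on a fixed time slice: with
`β′(r) = (κ/2) r e^{2β}(P+Q+G)`, `α′(r) = (κ/2) r e^{2β}(P+Q−G)`, `β(0) = α(0) = 0`, and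
`P, Q, G ≥ 0`, one gets the integral identity for `e^{−β}`, monotonicity of `β` with
`0 ≤ β(r) ≤ β(R)`, and two-sided integral bounds on `α`. -/
theorem metric_coefficient_bounds
    (κ R : ℝ) (hκ : 0 < κ) (hR : 0 < R)
    (P Q G : ℝ → ℝ)
    (hPc : ContinuousOn P (Set.Icc 0 R))
    (hQc : ContinuousOn Q (Set.Icc 0 R))
    (hGc : ContinuousOn G (Set.Icc 0 R))
    (hPnn : ∀ r ∈ Set.Icc (0:ℝ) R, 0 ≤ P r)
    (hQnn : ∀ r ∈ Set.Icc (0:ℝ) R, 0 ≤ Q r)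
    (hGnn : ∀ r ∈ Set.Icc (0:ℝ) R, 0 ≤ G r)
    (β α : ℝ → ℝ)
    (hβ0 : β 0 = 0) (hα0 : α 0 = 0)
    (hβ' : ∀ r ∈ Set.Icc (0:ℝ) R,
      HasDerivWithinAt β ((κ / 2) * r * exp (2 * β r) * (P r + Q r + G r)) (Set.Icc 0 R) r)
    (hα' : ∀ r ∈ Set.Icc (0:ℝ) R,
      HasDerivWithinAt α ((κ / 2) * r * exp (2 * β r) * (P r + Q r - G r)) (Set.Icc 0 R) r) :
    ∀ r ∈ Set.Icc (0:ℝ) R,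
      (exp (-β r) = 1 - (κ / 2) * ∫ s in (0:ℝ)..r, s * exp (β s) * (P s + Q s + G s))
      ∧ (MonotoneOn β (Set.Icc 0 R) ∧ 0 ≤ β r ∧ β r ≤ β R)
      ∧ (-((κ / 2) * ∫ s in (0:ℝ)..r, s * exp (2 * β s) * G s) ≤ α r
          ∧ α r ≤ (κ / 2) * ∫ s in (0:ℝ)..r, s * exp (2 * β s) * (P s + Q s)) :=
  metric_coefficient_bounds_general κ R hκ P Q G hPc hQc hGc hPnn hQnn hGnn β α hβ0 hα0 hβ' hα'
end

section
/- Let g : ℝ → ℝ be continuous with ∫_0^y g(s) ds → ∞ as y → ∞, and let E ≥ 0. Then there exists a constant c, depending only on g and E, with the following property: for every C¹ function φ : [0,∞) → [0,∞) with φ(0) = 0 and every continuous β : [0,∞) → ℝ such that the improper integrals satisfy ∫_0^∞ (g(φ(s))²/s) e^{β(s)} ds ≤ E and ∫_0^∞ e^{−β(s)} φ′(s)² s ds ≤ E, one has ∫_0^{φ(r)} g(s) ds ≤ E for every r ≥ 0, and consequently φ(r) ≤ c for every r ≥ 0. -/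
/-!
Along a slice, `℘(φ(r)) = ∫₀ʳ g(φ) φ'` by the chain rule, since `φ(0) = 0`. The weighted
AM–GM inequality `2uv ≤ u²t + v²/t` with `t = e^β/s` bounds the integrand by half the sum of
the two potential-energy densities, so `℘(φ(r)) ≤ E`. As `℘ → ∞`, the sublevel set
`{℘ ≤ E}` is bounded above, which gives the uniform bound on `φ`.
-/

open Real MeasureTheory Set Filter

theorem Filter.Tendsto.bddAbove_preimage_Iic {α β : Type*} [LinearOrder α] [Nonempty α]
    [Preorder β] [NoMaxOrder β] {f : α → β} (hf : Tendsto f atTop atTop) (b : β) :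
    BddAbove (f ⁻¹' Iic b) := by
  obtain ⟨c, hc⟩ := eventually_atTop.1 (hf.eventually_gt_atTop b)
  exact ⟨c, fun y hy => le_of_not_gt fun hcy => (hc y hcy.le).not_ge hy⟩

theorem two_mul_mul_le_sq_mul_add_sq_div {t : ℝ} (ht : 0 < t) (u v : ℝ) :
    2 * (u * v) ≤ u ^ 2 * t + v ^ 2 / t := by
  have hsq : u ^ 2 * t + v ^ 2 / t - 2 * (u * v) = (u * t - v) ^ 2 / t := by
    field_simp
    ring
  linarith [div_nonneg (sq_nonneg (u * t - v)) ht.le]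

theorem mul_le_weighted_energy_density {s : ℝ} (hs : 0 < s) (u v b : ℝ) :
    u * v ≤ (u ^ 2 / s * exp b + exp (-b) * v ^ 2 * s) / 2 := by
  have h := two_mul_mul_le_sq_mul_add_sq_div (div_pos (exp_pos b) hs) u v
  have h' : u ^ 2 * (exp b / s) + v ^ 2 / (exp b / s) =
      u ^ 2 / s * exp b + exp (-b) * v ^ 2 * s := by
    rw [exp_neg]
    field_simp
  linarith

theorem setIntegral_mul_le_weighted_energy {u v β : ℝ → ℝ} {S : Set ℝ} (hS : MeasurableSet S)
    (hS0 : S ⊆ Ioi 0) (huv : IntegrableOn (fun s => u s * v s) S)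
    (hu : IntegrableOn (fun s => u s ^ 2 / s * exp (β s)) (Ioi 0))
    (hv : IntegrableOn (fun s => exp (-β s) * v s ^ 2 * s) (Ioi 0)) :
    ∫ s in S, u s * v s ≤
      ((∫ s in Ioi 0, u s ^ 2 / s * exp (β s)) + ∫ s in Ioi 0, exp (-β s) * v s ^ 2 * s) / 2 := by
  have hu_nonneg : 0 ≤ᵐ[volume.restrict (Ioi 0)] fun s => u s ^ 2 / s * exp (β s) :=
    (ae_restrict_iff' measurableSet_Ioi).2 <| .of_forall fun s hs =>
      mul_nonneg (div_nonneg (sq_nonneg _) (le_of_lt hs)) (exp_pos _).le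
  have hv_nonneg : 0 ≤ᵐ[volume.restrict (Ioi 0)] fun s => exp (-β s) * v s ^ 2 * s :=
    (ae_restrict_iff' measurableSet_Ioi).2 <| .of_forall fun s hs =>
      mul_nonneg (mul_nonneg (exp_pos _).le (sq_nonneg _)) (le_of_lt hs)
  have hS_ae : S ≤ᵐ[volume] Ioi (0 : ℝ) := hS0.eventuallyLE
  calc ∫ s in S, u s * v s
      ≤ ∫ s in S, (u s ^ 2 / s * exp (β s) + exp (-β s) * v s ^ 2 * s) / 2 :=
        setIntegral_mono_on huv
          (by exact ((hu.mono_set hS0).add (hv.mono_set hS0)).div_const 2) hS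
          fun s hs => mul_le_weighted_energy_density (hS0 hs) _ _ _
    _ = ((∫ s in S, u s ^ 2 / s * exp (β s)) + ∫ s in S, exp (-β s) * v s ^ 2 * s) / 2 := by
        rw [integral_div, integral_add (hu.mono_set hS0) (hv.mono_set hS0)]
    _ ≤ ((∫ s in Ioi 0, u s ^ 2 / s * exp (β s)) +
          ∫ s in Ioi 0, exp (-β s) * v s ^ 2 * s) / 2 := by
        gcongr ?_ / 2
        exact add_le_add (setIntegral_mono_set hu hu_nonneg hS_ae)
          (setIntegral_mono_set hv hv_nonneg hS_ae)

section ChangeOfVariables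

variable {g φ : ℝ → ℝ} {a b : ℝ}

theorem eqOn_deriv_derivWithin_Ici_of_Ioc :
    EqOn (deriv φ) (derivWithin φ (Ici a)) (Ioc a b) :=
  fun _ hx => (derivWithin_of_mem_nhds (Ici_mem_nhds hx.1)).symm

theorem integrableOn_Ioc_comp_mul_deriv (hφ : ContDiffOn ℝ 1 φ (Ici a)) (hg : Continuous g) :
    IntegrableOn (fun s => g (φ s) * deriv φ s) (Ioc a b) := by
  have hcont : ContinuousOn (fun s => g (φ s) * derivWithin φ (Ici a) s) (Icc a b) :=
    ((hg.comp_continuousOn hφ.continuousOn).mul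
      (hφ.continuousOn_derivWithin (uniqueDiffOn_Ici a) le_rfl)).mono Icc_subset_Ici_self
  refine ((hcont.integrableOn_compact isCompact_Icc).mono_set Ioc_subset_Icc_self).congr_fun
    (fun s hs => ?_) measurableSet_Ioc
  rw [eqOn_deriv_derivWithin_Ici_of_Ioc hs]

theorem setIntegral_Ioc_comp_mul_deriv (hab : a ≤ b) (hφ : ContDiffOn ℝ 1 φ (Ici a))
    (hg : Continuous g) :
    ∫ s in Ioc a b, g (φ s) * deriv φ s = ∫ y in φ a..φ b, g y := by
  have hIcc : uIcc a b ⊆ Ici a := uIcc_of_le hab ▸ Icc_subset_Ici_self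
  have hderiv : ∀ x ∈ Ioo (min a b) (max a b),
      HasDerivWithinAt φ (derivWithin φ (Ici a) x) (Ioi x) x := by
    intro x hx
    rw [min_eq_left hab, max_eq_right hab] at hx
    exact (hφ.differentiableOn one_ne_zero x hx.1.le).hasDerivWithinAt.mono
      fun y hy => (hx.1.trans hy).le
  rw [← intervalIntegral.integral_comp_mul_deriv'' (hφ.continuousOn.mono hIcc) hderiv
    ((hφ.continuousOn_derivWithin (uniqueDiffOn_Ici a) le_rfl).mono hIcc) hg.continuousOn,
    intervalIntegral.integral_of_le hab]
  exact setIntegral_congr_fun measurableSet_Ioc fun s hs => by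
    simp only [Function.comp_apply, eqOn_deriv_derivWithin_Ici_of_Ioc hs]

end ChangeOfVariables

theorem phi_uniform_bound_general
    (g : ℝ → ℝ) (hg : Continuous g)
    (hg_inf : Filter.Tendsto (fun y => ∫ s in (0:ℝ)..y, g s) Filter.atTop Filter.atTop)
    (E : ℝ) :
    ∃ c : ℝ, ∀ φ β : ℝ → ℝ,
      ContDiffOn ℝ 1 φ (Set.Ici 0) →
      (∀ s ∈ Set.Ici (0:ℝ), 0 ≤ φ s) →
      φ 0 = 0 →
      ContinuousOn β (Set.Ici 0) →
      IntegrableOn (fun s => (g (φ s)) ^ 2 / s * exp (β s)) (Set.Ioi 0) →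
      (∫ s in Set.Ioi (0:ℝ), (g (φ s)) ^ 2 / s * exp (β s)) ≤ E →
      IntegrableOn (fun s => exp (-β s) * (deriv φ s) ^ 2 * s) (Set.Ioi 0) →
      (∫ s in Set.Ioi (0:ℝ), exp (-β s) * (deriv φ s) ^ 2 * s) ≤ E →
      ∀ r : ℝ, 0 ≤ r → (∫ s in (0:ℝ)..(φ r), g s) ≤ E ∧ φ r ≤ c := by
  obtain ⟨c, hc⟩ := hg_inf.bddAbove_preimage_Iic E
  refine ⟨c, fun φ β hφ _ hφ_axis _ hint₁ hE₁ hint₂ hE₂ r hr => ?_⟩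
  have hpot : ∫ s in (0:ℝ)..(φ r), g s ≤ E :=
    calc ∫ s in (0:ℝ)..(φ r), g s = ∫ s in Ioc 0 r, g (φ s) * deriv φ s := by
          rw [setIntegral_Ioc_comp_mul_deriv hr hφ hg, hφ_axis]
      _ ≤ ((∫ s in Ioi 0, g (φ s) ^ 2 / s * exp (β s)) +
            ∫ s in Ioi 0, exp (-β s) * deriv φ s ^ 2 * s) / 2 :=
          setIntegral_mul_le_weighted_energy measurableSet_Ioc (fun _ hs => hs.1)
            (integrableOn_Ioc_comp_mul_deriv hφ hg) hint₁ hint₂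
      _ ≤ E := by linarith
  exact ⟨hpot, hc hpot⟩

/-- Uniform bound on the wave-map profile: if `℘(y) = ∫_0^y g → ∞` as `y → ∞` and `E ≥ 0`,
there is a constant `c` depending only on `g` and `E` such that for every nonnegative C¹
profile `φ` vanishing on the axis whose potential energies are bounded by `E`, one has
`∫_0^{φ(r)} g ≤ E` and `φ(r) ≤ c` for all `r ≥ 0`. -/
theorem phi_uniform_bound
    (g : ℝ → ℝ) (hg : Continuous g)
    (hg_inf : Filter.Tendsto (fun y => ∫ s in (0:ℝ)..y, g s) Filter.atTop Filter.atTop)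
    (E : ℝ) (hE : 0 ≤ E) :
    ∃ c : ℝ, ∀ φ β : ℝ → ℝ,
      ContDiffOn ℝ 1 φ (Set.Ici 0) →
      (∀ s ∈ Set.Ici (0:ℝ), 0 ≤ φ s) →
      φ 0 = 0 →
      ContinuousOn β (Set.Ici 0) →
      IntegrableOn (fun s => (g (φ s)) ^ 2 / s * exp (β s)) (Set.Ioi 0) →
      (∫ s in Set.Ioi (0:ℝ), (g (φ s)) ^ 2 / s * exp (β s)) ≤ E →
      IntegrableOn (fun s => exp (-β s) * (deriv φ s) ^ 2 * s) (Set.Ioi 0) →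
      (∫ s in Set.Ioi (0:ℝ), exp (-β s) * (deriv φ s) ^ 2 * s) ≤ E →
      ∀ r : ℝ, 0 ≤ r → (∫ s in (0:ℝ)..(φ r), g s) ≤ E ∧ φ r ≤ c :=
  phi_uniform_bound_general g hg hg_inf E
end

section
/- Suppose that (N1), (N2) and (N3) hold on U. Define the mass m := 1 + 4 Ω^{−2} ∂_u r ∂_ū r and the stress-energy components S_{uu} := (∂_uφ)², S_{ūū} := (∂_ūφ)², S_{uū} := (Ω²/4) g(φ)²/r². Then at every point of U: ∂_u m = 4κ Ω^{−2} r ( S_{uū} ∂_u r − S_{uu} ∂_ū r ) and ∂_ū m = 4κ Ω^{−2} r ( S_{uū} ∂_ū r − S_{ūū} ∂_u r ). -/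
open Real

/-- Partial derivative in the null variable `u`. -/
noncomputable def pdu (f : ℝ → ℝ → ℝ) (u v : ℝ) : ℝ := deriv (fun u' => f u' v) u

/-- Partial derivative in the null variable `ū`. -/
noncomputable def pdub (f : ℝ → ℝ → ℝ) (u v : ℝ) : ℝ := deriv (fun v' => f u v') v

/-- The mass `m = 1 + 4 Ω^{−2} ∂_u r ∂_ū r`. -/
noncomputable def mass (Ω r : ℝ → ℝ → ℝ) (u v : ℝ) : ℝ :=
  1 + 4 * ((Ω u v) ^ 2)⁻¹ * pdu r u v * pdub r u v

/-!
Writing `m = 1 + 4 (Ω⁻² ∂_u r) ∂_ū r`, the Leibniz rule gives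
`∂_u m = 4 (∂_u(Ω⁻² ∂_u r) ∂_ū r + Ω⁻² ∂_u r ∂_u ∂_ū r)`,
into which (N1) and (N3) are substituted. The `ū`-derivative is the same computation with the
null coordinates exchanged; (N3) still applies because the mixed partial derivatives of the
`C²` function `r` commute.
-/

open Function Filter Topology

section PartialDerivatives

variable {f : ℝ → ℝ → ℝ} {u v : ℝ}

theorem pdu_swap : pdu (swap f) v u = pdub f u v := rfl

theorem pdub_swap : pdub (swap f) v u = pdu f u v := rfl

theorem DifferentiableAt.pdu_eq_fderiv (h : DifferentiableAt ℝ (uncurry f) (u, v)) :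
    pdu f u v = fderiv ℝ (uncurry f) (u, v) (1, 0) := by
  have := h.hasFDerivAt.comp_hasDerivAt u ((hasDerivAt_id u).prodMk (hasDerivAt_const u v))
  exact this.deriv

theorem DifferentiableAt.pdub_eq_fderiv (h : DifferentiableAt ℝ (uncurry f) (u, v)) :
    pdub f u v = fderiv ℝ (uncurry f) (u, v) (0, 1) := by
  have := h.hasFDerivAt.comp_hasDerivAt v ((hasDerivAt_const v u).prodMk (hasDerivAt_id v))
  exact this.deriv

theorem DifferentiableAt.hasDerivAt_pdu (h : DifferentiableAt ℝ (uncurry f) (u, v)) :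
    HasDerivAt (fun a => f a v) (pdu f u v) u := by
  rw [h.pdu_eq_fderiv]
  exact h.hasFDerivAt.comp_hasDerivAt u ((hasDerivAt_id u).prodMk (hasDerivAt_const u v))

theorem ContDiffAt.eventually_differentiableAt {n : WithTop ℕ∞}
    (h : ContDiffAt ℝ n (uncurry f) (u, v)) (hn : 1 ≤ n) :
    ∀ᶠ q in 𝓝 (u, v), DifferentiableAt ℝ (uncurry f) q :=
  ((h.of_le hn).eventually (by simp)).mono fun _ hq => hq.differentiableAt one_ne_zero

theorem eventuallyEq_uncurry_pdub {p : ℝ × ℝ}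
    (h : ∀ᶠ q in 𝓝 p, DifferentiableAt ℝ (uncurry f) q) :
    uncurry (pdub f) =ᶠ[𝓝 p] fun q => fderiv ℝ (uncurry f) q (0, 1) :=
  h.mono fun _ hq => hq.pdub_eq_fderiv

theorem eventuallyEq_uncurry_pdu {p : ℝ × ℝ}
    (h : ∀ᶠ q in 𝓝 p, DifferentiableAt ℝ (uncurry f) q) :
    uncurry (pdu f) =ᶠ[𝓝 p] fun q => fderiv ℝ (uncurry f) q (1, 0) :=
  h.mono fun _ hq => hq.pdu_eq_fderiv

theorem ContDiffAt.uncurry_pdu {n : WithTop ℕ∞}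
    (h : ContDiffAt ℝ (n + 1) (uncurry f) (u, v)) :
    ContDiffAt ℝ n (uncurry (pdu f)) (u, v) :=
  ((h.fderiv_right le_rfl).clm_apply contDiffAt_const).congr_of_eventuallyEq
    (eventuallyEq_uncurry_pdu (h.eventually_differentiableAt le_add_self))

theorem ContDiffAt.uncurry_pdub {n : WithTop ℕ∞}
    (h : ContDiffAt ℝ (n + 1) (uncurry f) (u, v)) :
    ContDiffAt ℝ n (uncurry (pdub f)) (u, v) :=
  ((h.fderiv_right le_rfl).clm_apply contDiffAt_const).congr_of_eventuallyEq
    (eventuallyEq_uncurry_pdub (h.eventually_differentiableAt le_add_self))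

theorem ContDiffAt.fderiv_uncurry_pdu (h : ContDiffAt ℝ 2 (uncurry f) (u, v)) (w : ℝ × ℝ) :
    fderiv ℝ (uncurry (pdu f)) (u, v) w =
      fderiv ℝ (fderiv ℝ (uncurry f)) (u, v) w (1, 0) := by
  have hD := (h.fderiv_right (m := 1) le_rfl).differentiableAt one_ne_zero
  rw [(eventuallyEq_uncurry_pdu (h.eventually_differentiableAt one_le_two)).fderiv_eq,
    fderiv_clm_apply hD (differentiableAt_const _)]
  simp

theorem ContDiffAt.fderiv_uncurry_pdub (h : ContDiffAt ℝ 2 (uncurry f) (u, v)) (w : ℝ × ℝ) :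
    fderiv ℝ (uncurry (pdub f)) (u, v) w =
      fderiv ℝ (fderiv ℝ (uncurry f)) (u, v) w (0, 1) := by
  have hD := (h.fderiv_right (m := 1) le_rfl).differentiableAt one_ne_zero
  rw [(eventuallyEq_uncurry_pdub (h.eventually_differentiableAt one_le_two)).fderiv_eq,
    fderiv_clm_apply hD (differentiableAt_const _)]
  simp

theorem ContDiffAt.pdu_pdub_comm (h : ContDiffAt ℝ 2 (uncurry f) (u, v)) :
    pdu (pdub f) u v = pdub (pdu f) u v := by
  rw [(h.uncurry_pdub.differentiableAt one_ne_zero).pdu_eq_fderiv,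
    (h.uncurry_pdu.differentiableAt one_ne_zero).pdub_eq_fderiv,
    h.fderiv_uncurry_pdub, h.fderiv_uncurry_pdu]
  exact h.isSymmSndFDerivAt (by simp) _ _

end PartialDerivatives

section Mass

variable {Ω r : ℝ → ℝ → ℝ} {u v : ℝ}

theorem mass_swap : mass (swap Ω) (swap r) = swap (mass Ω r) := by
  funext v u
  simp only [mass, pdu_swap, pdub_swap]
  rw [swap, mul_right_comm]

theorem pdu_mass (hΩ : DifferentiableAt ℝ (uncurry Ω) (u, v)) (hΩ0 : Ω u v ≠ 0)
    (hr : ContDiffAt ℝ 2 (uncurry r) (u, v)) :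
    pdu (mass Ω r) u v =
      4 * (pdu (fun u' v' => (Ω u' v' ^ 2)⁻¹ * pdu r u' v') u v * pdub r u v
        + (Ω u v ^ 2)⁻¹ * pdu r u v * pdu (pdub r) u v) := by
  have hA : DifferentiableAt ℝ (uncurry fun u' v' => (Ω u' v' ^ 2)⁻¹ * pdu r u' v') (u, v) :=
    ((hΩ.pow 2).inv (pow_ne_zero 2 hΩ0)).mul (hr.uncurry_pdu.differentiableAt one_ne_zero)
  have hB := hr.uncurry_pdub.differentiableAt one_ne_zero
  have hm : (fun a => mass Ω r a v) =
      fun a => 1 + 4 * ((Ω a v ^ 2)⁻¹ * pdu r a v * pdub r a v) := by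
    funext a
    simp only [mass]
    ring
  rw [pdu, hm]
  exact (((hA.hasDerivAt_pdu.mul hB.hasDerivAt_pdu).const_mul 4).const_add 1).deriv

theorem pdub_mass (hΩ : DifferentiableAt ℝ (uncurry Ω) (u, v)) (hΩ0 : Ω u v ≠ 0)
    (hr : ContDiffAt ℝ 2 (uncurry r) (u, v)) :
    pdub (mass Ω r) u v =
      4 * (pdub (fun u' v' => (Ω u' v' ^ 2)⁻¹ * pdub r u' v') u v * pdu r u v
        + (Ω u v ^ 2)⁻¹ * pdub r u v * pdu (pdub r) u v) := by
  have hswap : ContDiffAt ℝ 2 (fun p : ℝ × ℝ => (p.2, p.1)) (v, u) :=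
    contDiffAt_snd.prodMk contDiffAt_fst
  have hΩ' := hΩ.comp (v, u) (hswap.differentiableAt two_ne_zero)
  have hr' := hr.comp (v, u) hswap
  rw [hr.pdu_pdub_comm, ← pdu_swap, ← mass_swap]
  exact pdu_mass hΩ' hΩ0 hr'

end Mass

theorem mass_derivatives_general
    (κ : ℝ)
    (g : ℝ → ℝ)
    (U : Set (ℝ × ℝ)) (hU : IsOpen U)
    (Ω r φ : ℝ → ℝ → ℝ)
    (hΩ : ContDiffOn ℝ 2 (fun p : ℝ × ℝ => Ω p.1 p.2) U)
    (hr : ContDiffOn ℝ 2 (fun p : ℝ × ℝ => r p.1 p.2) U)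
    (hΩpos : ∀ p ∈ U, 0 < Ω p.1 p.2)
    (hrpos : ∀ p ∈ U, 0 < r p.1 p.2)
    (hN1 : ∀ u v : ℝ, (u, v) ∈ U →
      pdu (fun u' v' => ((Ω u' v') ^ 2)⁻¹ * pdu r u' v') u v
        = -(((Ω u v) ^ 2)⁻¹ * κ * r u v * (pdu φ u v) ^ 2))
    (hN2 : ∀ u v : ℝ, (u, v) ∈ U →
      pdub (fun u' v' => ((Ω u' v') ^ 2)⁻¹ * pdub r u' v') u v
        = -(((Ω u v) ^ 2)⁻¹ * κ * r u v * (pdub φ u v) ^ 2))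
    (hN3 : ∀ u v : ℝ, (u, v) ∈ U →
      pdu (pdub r) u v = κ * (Ω u v) ^ 2 * (g (φ u v)) ^ 2 / (4 * r u v)) :
    ∀ u v : ℝ, (u, v) ∈ U →
      (pdu (mass Ω r) u v
        = 4 * κ * ((Ω u v) ^ 2)⁻¹ * r u v *
            (((Ω u v) ^ 2 / 4) * (g (φ u v)) ^ 2 / (r u v) ^ 2 * pdu r u v
              - (pdu φ u v) ^ 2 * pdub r u v))
      ∧ (pdub (mass Ω r) u v
        = 4 * κ * ((Ω u v) ^ 2)⁻¹ * r u v *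
            (((Ω u v) ^ 2 / 4) * (g (φ u v)) ^ 2 / (r u v) ^ 2 * pdub r u v
              - (pdub φ u v) ^ 2 * pdu r u v)) := by
  intro u v hp
  have hΩp : DifferentiableAt ℝ (uncurry Ω) (u, v) :=
    (hΩ.contDiffAt (hU.mem_nhds hp)).differentiableAt two_ne_zero
  have hrp : ContDiffAt ℝ 2 (uncurry r) (u, v) := hr.contDiffAt (hU.mem_nhds hp)
  have hΩ0 : Ω u v ≠ 0 := (hΩpos _ hp).ne'
  have hr0 : r u v ≠ 0 := (hrpos _ hp).ne'
  constructor
  · rw [pdu_mass hΩp hΩ0 hrp, hN1 u v hp, hN3 u v hp]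
    field_simp
    ring
  · rw [pdub_mass hΩp hΩ0 hrp, hN2 u v hp, hN3 u v hp]
    field_simp
    ring

/-- Given (N1), (N2), (N3) on `U`, the mass `m = 1 + 4Ω^{−2}∂_u r ∂_ū r` satisfies
`∂_u m = 4κ Ω^{−2} r (S_{uū} ∂_u r − S_{uu} ∂_ū r)` and
`∂_ū m = 4κ Ω^{−2} r (S_{uū} ∂_ū r − S_{ūū} ∂_u r)`, where `S_{uu} = (∂_uφ)²`,
`S_{ūū} = (∂_ūφ)²`, `S_{uū} = (Ω²/4) g(φ)²/r²`. -/
theorem mass_derivatives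
    (κ : ℝ) (hκ : 0 < κ)
    (g : ℝ → ℝ) (hg : ContDiff ℝ 1 g)
    (U : Set (ℝ × ℝ)) (hU : IsOpen U)
    (Ω r φ : ℝ → ℝ → ℝ)
    (hΩ : ContDiffOn ℝ 2 (fun p : ℝ × ℝ => Ω p.1 p.2) U)
    (hr : ContDiffOn ℝ 2 (fun p : ℝ × ℝ => r p.1 p.2) U)
    (hφ : ContDiffOn ℝ 2 (fun p : ℝ × ℝ => φ p.1 p.2) U)
    (hΩpos : ∀ p ∈ U, 0 < Ω p.1 p.2)
    (hrpos : ∀ p ∈ U, 0 < r p.1 p.2)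
    (hN1 : ∀ u v : ℝ, (u, v) ∈ U →
      pdu (fun u' v' => ((Ω u' v') ^ 2)⁻¹ * pdu r u' v') u v
        = -(((Ω u v) ^ 2)⁻¹ * κ * r u v * (pdu φ u v) ^ 2))
    (hN2 : ∀ u v : ℝ, (u, v) ∈ U →
      pdub (fun u' v' => ((Ω u' v') ^ 2)⁻¹ * pdub r u' v') u v
        = -(((Ω u v) ^ 2)⁻¹ * κ * r u v * (pdub φ u v) ^ 2))
    (hN3 : ∀ u v : ℝ, (u, v) ∈ U →
      pdu (pdub r) u v = κ * (Ω u v) ^ 2 * (g (φ u v)) ^ 2 / (4 * r u v)) :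
    ∀ u v : ℝ, (u, v) ∈ U →
      (pdu (mass Ω r) u v
        = 4 * κ * ((Ω u v) ^ 2)⁻¹ * r u v *
            (((Ω u v) ^ 2 / 4) * (g (φ u v)) ^ 2 / (r u v) ^ 2 * pdu r u v
              - (pdu φ u v) ^ 2 * pdub r u v))
      ∧ (pdub (mass Ω r) u v
        = 4 * κ * ((Ω u v) ^ 2)⁻¹ * r u v *
            (((Ω u v) ^ 2 / 4) * (g (φ u v)) ^ 2 / (r u v) ^ 2 * pdub r u v
              - (pdub φ u v) ^ 2 * pdu r u v)) :=
  mass_derivatives_general κ g U hU Ω r φ hΩ hr hΩpos hrpos hN1 hN2 hN3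
end

section
/- Let t₀ < t₁, let R : [t₀,t₁] → (0,∞) be C¹, and let U ⊆ ℝ² be an open set containing K := {(t,r) : t₀ ≤ t ≤ t₁, 0 ≤ r ≤ R(t)}. Suppose (E1) and (E2) hold on K ∩ {r > 0}, and suppose the functions (t,r) ↦ r e^{β} 𝐞 and (t,r) ↦ r e^{α} 𝐦, a priori defined for r > 0, extend to C¹ functions A and B on U with B(t,0) = 0 for all t. If R′(t) = −e^{(α−β)(t,R(t))} for all t ∈ [t₀,t₁] (so that the curve r = R(t) is ingoing null), then the function E(t) := ∫_0^{R(t)} A(t,r) dr is nonincreasing on [t₀,t₁]; in particular E(t₁) ≤ E(t₀). -/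
/-!
`Φ := -e^{-β}/κ` is a potential for the energy current: (E1) says `∂_r Φ = r e^β 𝐞 = A` and
(E2) says `∂_t Φ = r e^α 𝐦 = B`. Hence `E(t) = Φ(t, R(t)) - Φ(t, 0)`, and by the chain rule
`E'(t) = B(t, R) + R' A(t, R) - B(t, 0)`. The axis term vanishes, and on the ingoing null curve
`B + R' A = r e^α (𝐦 - 𝐞) ≤ 0`, since `𝐞 - 𝐦 = ½ (e^{-α} ∂_t φ - e^{-β} ∂_r φ)² + ½ 𝐟 ≥ 0`.
-/

open Real

/-- The truncated-cone region `K = {(t,r) : t₀ ≤ t ≤ t₁, 0 ≤ r ≤ R(t)}`. -/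
def Kreg (t₀ t₁ : ℝ) (R : ℝ → ℝ) : Set (ℝ × ℝ) :=
  {p | t₀ ≤ p.1 ∧ p.1 ≤ t₁ ∧ 0 ≤ p.2 ∧ p.2 ≤ R p.1}

open Set Function

section PartialDerivatives

variable {f : ℝ → ℝ → ℝ} {t r : ℝ}

lemma pdt_eq_fderiv (hf : DifferentiableAt ℝ (uncurry f) (t, r)) :
    pdt f t r = fderiv ℝ (uncurry f) (t, r) (1, 0) := by
  have h := hf.hasFDerivAt.comp_hasDerivAt t ((hasDerivAt_id t).prodMk (hasDerivAt_const t r))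
  exact h.deriv

lemma pdr_eq_fderiv (hf : DifferentiableAt ℝ (uncurry f) (t, r)) :
    pdr f t r = fderiv ℝ (uncurry f) (t, r) (0, 1) := by
  have h := hf.hasFDerivAt.comp_hasDerivAt r ((hasDerivAt_const r t).prodMk (hasDerivAt_id r))
  exact h.deriv

lemma hasDerivAt_pdt (hf : DifferentiableAt ℝ (uncurry f) (t, r)) :
    HasDerivAt (fun t' => f t' r) (pdt f t r) t := by
  rw [pdt_eq_fderiv hf]
  exact hf.hasFDerivAt.comp_hasDerivAt t ((hasDerivAt_id t).prodMk (hasDerivAt_const t r))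

lemma hasDerivAt_pdr (hf : DifferentiableAt ℝ (uncurry f) (t, r)) :
    HasDerivAt (f t) (pdr f t r) r := by
  rw [pdr_eq_fderiv hf]
  exact hf.hasFDerivAt.comp_hasDerivAt r ((hasDerivAt_const r t).prodMk (hasDerivAt_id r))

lemma hasDerivWithinAt_comp_graph {c : ℝ → ℝ} {c' : ℝ} {s : Set ℝ}
    (hf : DifferentiableAt ℝ (uncurry f) (t, c t)) (hc : HasDerivWithinAt c c' s t) :
    HasDerivWithinAt (fun τ => f τ (c τ)) (pdt f t (c t) + c' * pdr f t (c t)) s t := by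
  have hchain := hf.hasFDerivAt.comp_hasDerivWithinAt t ((hasDerivWithinAt_id t s).prodMk hc)
  have hsplit : ((1 : ℝ), c') = (1, 0) + c' • (0, 1) := by simp
  rwa [hsplit, map_add, map_smul, smul_eq_mul, ← pdt_eq_fderiv hf, ← pdr_eq_fderiv hf] at hchain

lemma continuousOn_pdt {U : Set (ℝ × ℝ)} (hf : ContDiffOn ℝ 1 (uncurry f) U) (hU : IsOpen U) :
    ContinuousOn (uncurry (pdt f)) U := by
  have hfderiv : ContinuousOn (fun p => fderiv ℝ (uncurry f) p (1, 0)) U :=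
    (ContinuousLinearMap.apply ℝ ℝ ((1 : ℝ), (0 : ℝ))).continuous.comp_continuousOn
      (hf.continuousOn_fderiv_of_isOpen hU le_rfl)
  refine hfderiv.congr fun p hp => ?_
  exact pdt_eq_fderiv ((hf.differentiableOn one_ne_zero).differentiableAt (hU.mem_nhds hp))

lemma ContinuousOn.slice {U : Set (ℝ × ℝ)} {s : Set ℝ} (hf : ContinuousOn (uncurry f) U)
    (hs : ∀ r ∈ s, (t, r) ∈ U) : ContinuousOn (f t) s :=
  hf.comp (Continuous.prodMk_right t).continuousOn hs

end PartialDerivatives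

section Potential

variable {Φ A B : ℝ → ℝ → ℝ} {R R' : ℝ → ℝ} {t₀ t₁ : ℝ} {U : Set (ℝ × ℝ)}

lemma mem_Kreg {t r : ℝ} (ht : t ∈ Icc t₀ t₁) (hr : r ∈ Icc 0 (R t)) : (t, r) ∈ Kreg t₀ t₁ R :=
  ⟨ht.1, ht.2, hr.1, hr.2⟩

lemma integral_eq_potential_sub (hU : IsOpen U) (hKU : Kreg t₀ t₁ R ⊆ U)
    (hΦ : ContDiffOn ℝ 1 (uncurry Φ) U) (hA : ContinuousOn (uncurry A) U)
    (hΦr : ∀ t r, (t, r) ∈ Kreg t₀ t₁ R → 0 < r → pdr Φ t r = A t r)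
    {t : ℝ} (ht : t ∈ Icc t₀ t₁) (hRt : 0 ≤ R t) :
    ∫ r in (0 : ℝ)..R t, A t r = Φ t (R t) - Φ t 0 := by
  have hslice : ∀ r ∈ Icc 0 (R t), (t, r) ∈ U := fun r hr => hKU (mem_Kreg ht hr)
  refine intervalIntegral.integral_eq_sub_of_hasDeriv_right_of_le hRt
    (hΦ.continuousOn.slice hslice) (fun r hr => ?_) ?_
  · have hdiff := (hΦ.differentiableOn one_ne_zero).differentiableAt
      (hU.mem_nhds (hslice r (Ioo_subset_Icc_self hr)))
    rw [← hΦr t r (mem_Kreg ht (Ioo_subset_Icc_self hr)) hr.1]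
    exact (hasDerivAt_pdr hdiff).hasDerivWithinAt
  · exact (hA.slice (by rwa [uIcc_of_le hRt])).intervalIntegrable

/-- By continuity: the axis lies in the closure of `{r > 0}`, where `∂_t Φ = B`. -/
lemma pdt_eq_at_axis (hU : IsOpen U) (hKU : Kreg t₀ t₁ R ⊆ U)
    (hΦ : ContDiffOn ℝ 1 (uncurry Φ) U) (hB : ContinuousOn (uncurry B) U)
    (hΦt : ∀ t r, (t, r) ∈ Kreg t₀ t₁ R → 0 < r → pdt Φ t r = B t r)
    {t : ℝ} (ht : t ∈ Icc t₀ t₁) (hRt : 0 < R t) :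
    pdt Φ t 0 = B t 0 := by
  have hslice : ∀ r ∈ Icc 0 (R t), (t, r) ∈ U := fun r hr => hKU (mem_Kreg ht hr)
  have hEqOn : EqOn (pdt Φ t) (B t) (Ioo 0 (R t)) := fun r hr =>
    hΦt t r (mem_Kreg ht (Ioo_subset_Icc_self hr)) hr.1
  refine hEqOn.of_subset_closure ((continuousOn_pdt hΦ hU).slice hslice) (hB.slice hslice)
    Ioo_subset_Icc_self (closure_Ioo hRt.ne).ge ⟨le_rfl, hRt.le⟩

lemma antitoneOn_integral_of_potential (hU : IsOpen U) (hKU : Kreg t₀ t₁ R ⊆ U)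
    (hRpos : ∀ t ∈ Icc t₀ t₁, 0 < R t)
    (hR : ∀ t ∈ Icc t₀ t₁, HasDerivWithinAt R (R' t) (Icc t₀ t₁) t)
    (hΦ : ContDiffOn ℝ 1 (uncurry Φ) U)
    (hA : ContinuousOn (uncurry A) U) (hB : ContinuousOn (uncurry B) U)
    (hΦr : ∀ t r, (t, r) ∈ Kreg t₀ t₁ R → 0 < r → pdr Φ t r = A t r)
    (hΦt : ∀ t r, (t, r) ∈ Kreg t₀ t₁ R → 0 < r → pdt Φ t r = B t r)
    (hB0 : ∀ t ∈ Ioo t₀ t₁, B t 0 = 0)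
    (hflux : ∀ t ∈ Ioo t₀ t₁, B t (R t) + R' t * A t (R t) ≤ 0) :
    AntitoneOn (fun t => ∫ r in (0 : ℝ)..R t, A t r) (Icc t₀ t₁) := by
  have hdiff : ∀ p ∈ U, DifferentiableAt ℝ (uncurry Φ) p := fun p hp =>
    (hΦ.differentiableOn one_ne_zero).differentiableAt (hU.mem_nhds hp)
  have hbdry : ∀ t ∈ Icc t₀ t₁, HasDerivWithinAt (fun τ => Φ τ (R τ) - Φ τ 0)
      ((pdt Φ t (R t) + R' t * pdr Φ t (R t)) - (pdt Φ t 0 + 0 * pdr Φ t 0)) (Icc t₀ t₁) t :=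
    fun t ht =>
      (hasDerivWithinAt_comp_graph (hdiff _ (hKU (mem_Kreg ht ⟨(hRpos t ht).le, le_rfl⟩)))
        (hR t ht)).sub
      (hasDerivWithinAt_comp_graph (c := fun _ => 0)
        (hdiff _ (hKU (mem_Kreg ht ⟨le_rfl, (hRpos t ht).le⟩))) (hasDerivWithinAt_const _ _ _))
  have hE : EqOn (fun t => ∫ r in (0 : ℝ)..R t, A t r) (fun τ => Φ τ (R τ) - Φ τ 0)
      (Icc t₀ t₁) := fun t ht =>
    integral_eq_potential_sub hU hKU hΦ hA hΦr ht (hRpos t ht).le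
  refine AntitoneOn.congr ?_ hE.symm
  refine antitoneOn_of_hasDerivWithinAt_nonpos (convex_Icc t₀ t₁)
    (fun t ht => (hbdry t ht).continuousWithinAt) (fun t ht => (hbdry t
      (interior_subset ht)).mono interior_subset) fun t ht => ?_
  rw [interior_Icc] at ht
  have ht' : t ∈ Icc t₀ t₁ := Ioo_subset_Icc_self ht
  have hK : (t, R t) ∈ Kreg t₀ t₁ R := mem_Kreg ht' ⟨(hRpos t ht').le, le_rfl⟩
  rw [hΦt t _ hK (hRpos t ht'), hΦr t _ hK (hRpos t ht'),
    pdt_eq_at_axis hU hKU hΦ hB hΦt ht' (hRpos t ht'), hB0 t ht]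
  linarith [hflux t ht]

end Potential

lemma mDen_le_eDen (g : ℝ → ℝ) (α β φ : ℝ → ℝ → ℝ) (t r : ℝ) :
    mDen α β φ t r ≤ eDen g α β φ t r := by
  have hα : exp (-(2 * α t r)) = exp (-α t r) ^ 2 := by rw [← exp_nat_mul]; ring_nf
  have hβ : exp (-(2 * β t r)) = exp (-β t r) ^ 2 := by rw [← exp_nat_mul]; ring_nf
  have hαβ : exp (-(α t r + β t r)) = exp (-α t r) * exp (-β t r) := by rw [← exp_add]; ring_nf
  rw [mDen, eDen, hα, hβ, hαβ]
  nlinarith [sq_nonneg (exp (-α t r) * pdt φ t r - exp (-β t r) * pdr φ t r),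
    div_nonneg (sq_nonneg (g (φ t r))) (sq_nonneg r)]

lemma ingoing_null_flux_nonpos (g : ℝ → ℝ) (α β φ : ℝ → ℝ → ℝ) {t r : ℝ} (hr : 0 ≤ r) :
    r * exp (α t r) * mDen α β φ t r
      + -exp (α t r - β t r) * (r * exp (β t r) * eDen g α β φ t r) ≤ 0 := by
  have hexp : exp (α t r - β t r) * exp (β t r) = exp (α t r) := by rw [← exp_add]; ring_nf
  have hflux : r * exp (α t r) * mDen α β φ t r
      + -exp (α t r - β t r) * (r * exp (β t r) * eDen g α β φ t r)
      = r * exp (α t r) * (mDen α β φ t r - eDen g α β φ t r) := by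
    linear_combination (-(r * eDen g α β φ t r)) * hexp
  rw [hflux]
  exact mul_nonpos_of_nonneg_of_nonpos (by positivity) (sub_nonpos.2 (mDen_le_eDen g α β φ t r))

lemma hasDerivAt_neg_exp_neg_div {f : ℝ → ℝ} {f' x : ℝ} (hf : HasDerivAt f f' x) (κ : ℝ) :
    HasDerivAt (fun y => -exp (-f y) / κ) (exp (-f x) * f' / κ) x :=
  (hf.neg.exp.neg.div_const κ).congr_deriv (by rw [Pi.neg_apply]; ring)

noncomputable def conePotential (κ : ℝ) (β : ℝ → ℝ → ℝ) (t r : ℝ) : ℝ := -exp (-β t r) / κ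

section ConePotential

variable {κ : ℝ} {β : ℝ → ℝ → ℝ} {t r : ℝ}

lemma pdr_conePotential (hβ : DifferentiableAt ℝ (uncurry β) (t, r)) :
    pdr (conePotential κ β) t r = exp (-β t r) * pdr β t r / κ :=
  (hasDerivAt_neg_exp_neg_div (hasDerivAt_pdr hβ) κ).deriv

lemma pdt_conePotential (hβ : DifferentiableAt ℝ (uncurry β) (t, r)) :
    pdt (conePotential κ β) t r = exp (-β t r) * pdt β t r / κ :=
  (hasDerivAt_neg_exp_neg_div (hasDerivAt_pdt hβ) κ).deriv

lemma pdr_conePotential_of_E1 {g : ℝ → ℝ} {α φ : ℝ → ℝ → ℝ} (hκ : κ ≠ 0)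
    (hβ : DifferentiableAt ℝ (uncurry β) (t, r))
    (hE1 : pdr β t r = (κ / 2) * r * exp (2 * β t r) *
      (exp (-(2 * α t r)) * (pdt φ t r) ^ 2 + exp (-(2 * β t r)) * (pdr φ t r) ^ 2
        + (g (φ t r)) ^ 2 / r ^ 2)) :
    pdr (conePotential κ β) t r = r * exp (β t r) * eDen g α β φ t r := by
  have hexp : exp (-β t r) * exp (2 * β t r) = exp (β t r) := by rw [← exp_add]; ring_nf
  rw [pdr_conePotential hβ, hE1, eDen, ← hexp]
  field_simp

lemma pdt_conePotential_of_E2 {α φ : ℝ → ℝ → ℝ} (hκ : κ ≠ 0)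
    (hβ : DifferentiableAt ℝ (uncurry β) (t, r))
    (hE2 : pdt β t r = κ * r * pdt φ t r * pdr φ t r) :
    pdt (conePotential κ β) t r = r * exp (α t r) * mDen α β φ t r := by
  have hexp : exp (α t r) * exp (-(α t r + β t r)) = exp (-β t r) := by rw [← exp_add]; ring_nf
  rw [pdt_conePotential hβ, hE2, mDen, ← hexp]
  field_simp

end ConePotential

theorem cone_energy_monotone_general
    (κ : ℝ) (hκ : 0 < κ)
    (g : ℝ → ℝ)
    (t₀ t₁ : ℝ) (ht : t₀ < t₁)
    (R : ℝ → ℝ) (hRpos : ∀ t ∈ Set.Icc t₀ t₁, 0 < R t)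
    (U : Set (ℝ × ℝ)) (hU : IsOpen U) (hKU : Kreg t₀ t₁ R ⊆ U)
    (α β φ : ℝ → ℝ → ℝ)
    (hβ : ContDiffOn ℝ 2 (fun p : ℝ × ℝ => β p.1 p.2) U)
    (hE1 : ∀ t r : ℝ, (t, r) ∈ Kreg t₀ t₁ R → 0 < r →
      pdr β t r = (κ / 2) * r * exp (2 * β t r) *
        (exp (-(2 * α t r)) * (pdt φ t r) ^ 2 + exp (-(2 * β t r)) * (pdr φ t r) ^ 2
          + (g (φ t r)) ^ 2 / r ^ 2))
    (hE2 : ∀ t r : ℝ, (t, r) ∈ Kreg t₀ t₁ R → 0 < r →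
      pdt β t r = κ * r * pdt φ t r * pdr φ t r)
    (A B : ℝ → ℝ → ℝ)
    (hA : ContDiffOn ℝ 1 (fun p : ℝ × ℝ => A p.1 p.2) U)
    (hB : ContDiffOn ℝ 1 (fun p : ℝ × ℝ => B p.1 p.2) U)
    (hAeq : ∀ t r : ℝ, (t, r) ∈ U → 0 < r → A t r = r * exp (β t r) * eDen g α β φ t r)
    (hBeq : ∀ t r : ℝ, (t, r) ∈ U → 0 < r → B t r = r * exp (α t r) * mDen α β φ t r)
    (hB0 : ∀ t : ℝ, B t 0 = 0)
    (hR' : ∀ t ∈ Set.Icc t₀ t₁,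
      HasDerivWithinAt R (-(exp (α t (R t) - β t (R t)))) (Set.Icc t₀ t₁) t) :
    AntitoneOn (fun t => ∫ r in (0:ℝ)..(R t), A t r) (Set.Icc t₀ t₁)
    ∧ (∫ r in (0:ℝ)..(R t₁), A t₁ r) ≤ ∫ r in (0:ℝ)..(R t₀), A t₀ r := by
  have hβC1 : ContDiffOn ℝ 1 (uncurry β) U := hβ.of_le one_le_two
  have hβdiff : ∀ p ∈ U, DifferentiableAt ℝ (uncurry β) p := fun p hp =>
    (hβC1.differentiableOn one_ne_zero).differentiableAt (hU.mem_nhds hp)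
  have hmono := antitoneOn_integral_of_potential (Φ := conePotential κ β) hU hKU hRpos hR'
    (hβC1.neg.exp.neg.div_const κ) hA.continuousOn hB.continuousOn
    (fun t r hK hr => by
      rw [pdr_conePotential_of_E1 hκ.ne' (hβdiff _ (hKU hK)) (hE1 t r hK hr),
        hAeq t r (hKU hK) hr])
    (fun t r hK hr => by
      rw [pdt_conePotential_of_E2 hκ.ne' (hβdiff _ (hKU hK)) (hE2 t r hK hr),
        hBeq t r (hKU hK) hr])
    (fun t _ => hB0 t)
    (fun t ht => by
      have hRt := hRpos t (Ioo_subset_Icc_self ht)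
      have hUR := hKU (mem_Kreg (Ioo_subset_Icc_self ht) ⟨hRt.le, le_rfl⟩)
      rw [hAeq t _ hUR hRt, hBeq t _ hUR hRt]
      exact ingoing_null_flux_nonpos g α β φ hRt.le)
  exact ⟨hmono, hmono (left_mem_Icc.2 ht.le) (right_mem_Icc.2 ht.le) ht.le⟩

/-- Monotonicity of the energy inside the backward null cone: if (E1),(E2) hold on
`K ∩ {r > 0}`, the currents `r e^β 𝐞` and `r e^α 𝐦` extend to C¹ functions `A`, `B` on `U`
with `B(t,0) = 0`, and the curve `r = R(t)` is ingoing null, then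
`E(t) = ∫_0^{R(t)} A(t,r) dr` is nonincreasing; in particular `E(t₁) ≤ E(t₀)`. -/
theorem cone_energy_monotone
    (κ : ℝ) (hκ : 0 < κ)
    (g : ℝ → ℝ) (hg : ContDiff ℝ 1 g)
    (t₀ t₁ : ℝ) (ht : t₀ < t₁)
    (R : ℝ → ℝ) (hRpos : ∀ t ∈ Set.Icc t₀ t₁, 0 < R t)
    (hRC1 : ContDiffOn ℝ 1 R (Set.Icc t₀ t₁))
    (U : Set (ℝ × ℝ)) (hU : IsOpen U) (hKU : Kreg t₀ t₁ R ⊆ U)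
    (α β φ : ℝ → ℝ → ℝ)
    (hα : ContDiffOn ℝ 2 (fun p : ℝ × ℝ => α p.1 p.2) U)
    (hβ : ContDiffOn ℝ 2 (fun p : ℝ × ℝ => β p.1 p.2) U)
    (hφ : ContDiffOn ℝ 2 (fun p : ℝ × ℝ => φ p.1 p.2) U)
    (hE1 : ∀ t r : ℝ, (t, r) ∈ Kreg t₀ t₁ R → 0 < r →
      pdr β t r = (κ / 2) * r * exp (2 * β t r) *
        (exp (-(2 * α t r)) * (pdt φ t r) ^ 2 + exp (-(2 * β t r)) * (pdr φ t r) ^ 2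
          + (g (φ t r)) ^ 2 / r ^ 2))
    (hE2 : ∀ t r : ℝ, (t, r) ∈ Kreg t₀ t₁ R → 0 < r →
      pdt β t r = κ * r * pdt φ t r * pdr φ t r)
    (A B : ℝ → ℝ → ℝ)
    (hA : ContDiffOn ℝ 1 (fun p : ℝ × ℝ => A p.1 p.2) U)
    (hB : ContDiffOn ℝ 1 (fun p : ℝ × ℝ => B p.1 p.2) U)
    (hAeq : ∀ t r : ℝ, (t, r) ∈ U → 0 < r → A t r = r * exp (β t r) * eDen g α β φ t r)
    (hBeq : ∀ t r : ℝ, (t, r) ∈ U → 0 < r → B t r = r * exp (α t r) * mDen α β φ t r)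
    (hB0 : ∀ t : ℝ, B t 0 = 0)
    (hR' : ∀ t ∈ Set.Icc t₀ t₁,
      HasDerivWithinAt R (-(exp (α t (R t) - β t (R t)))) (Set.Icc t₀ t₁) t) :
    AntitoneOn (fun t => ∫ r in (0:ℝ)..(R t), A t r) (Set.Icc t₀ t₁)
    ∧ (∫ r in (0:ℝ)..(R t₁), A t₁ r) ≤ ∫ r in (0:ℝ)..(R t₀), A t₀ r :=
  cone_energy_monotone_general κ hκ g t₀ t₁ ht R hRpos U hU hKU α β φ hβ hE1 hE2 A B hA hB hAeq hBeq
    hB0 hR'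
end

section
/- Let g : ℝ → ℝ be C¹, odd, with g′(0) = 1 and g(s) > 0 for every s > 0 (as holds under the Grillakis condition s g′(s) + g(s) > 0 for s > 0). Then there exist ε₀ > 0 and C > 0, depending only on g, with the following property: for every 0 < ε ≤ ε₀, all reals a < b, every C¹ function φ : [a,b] → [0,∞) with φ(b) = 0, and every continuous ρ : [a,b) → (0,∞), if (as improper integrals) ∫_a^b φ′(s)² ρ(s) ds ≤ ε and ∫_a^b g(φ(s))²/ρ(s) ds ≤ ε, then φ(x) ≤ C√ε for every x ∈ [a,b]. -/
open Real MeasureTheory Set Filter Topology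

/-!
Write `℘ y = ∫ t in 0..y, g t`. Along the line, `(℘ ∘ φ)' = g(φ) φ'`, and AM–GM with the weight `ρ`
bounds `|g(φ) φ'|` by half the sum of the two flux densities; integrating from `x` to the axis,
where `φ` vanishes, gives `℘(φ x) ≤ ε`. Since `g' 0 = 1`, `g y ≥ y / 2` on some `[0, δ]`, so
`℘ y ≥ y² / 4` there, and since `g ≥ 0` on `[0, ∞)`, `℘ ≥ δ² / 4` beyond `δ`. Hence for
`ε ≤ δ² / 8` the bound `℘(φ x) ≤ ε` forces `φ x ² / 4 ≤ ε`, i.e. `φ x ≤ 2 √ε`.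
-/

lemma exists_mul_le_of_hasDerivAt_zero {g : ℝ → ℝ} {g' c : ℝ} (hg : HasDerivAt g g' 0)
    (hc : c < g') (hg0 : 0 ≤ g 0) : ∃ δ > 0, ∀ y ∈ Ioo 0 δ, c * y ≤ g y := by
  have hslope : ∀ᶠ y in 𝓝[>] 0, c < slope g 0 y :=
    ((hasDerivAt_iff_tendsto_slope.1 hg).mono_left (nhdsGT_le_nhdsNE 0)).eventually_const_lt hc
  obtain ⟨δ, hδ, hsub⟩ := mem_nhdsGT_iff_exists_Ioo_subset.1 hslope
  refine ⟨δ, hδ, fun y hy => ?_⟩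
  have hy' := hsub hy
  rw [mem_ofPred_eq, slope_def_field, sub_zero, lt_div_iff₀ hy.1] at hy'
  linarith

lemma mul_sq_div_two_le_integral {g : ℝ → ℝ} {c δ y : ℝ} (hg : Continuous g)
    (hlin : ∀ t ∈ Ioo 0 δ, c * t ≤ g t) (hy : 0 ≤ y) (hyδ : y ≤ δ) :
    c * y ^ 2 / 2 ≤ ∫ t in (0)..y, g t := by
  calc c * y ^ 2 / 2 = ∫ t in (0)..y, c * t := by
        rw [intervalIntegral.integral_const_mul, integral_id]; ring
    _ ≤ ∫ t in (0)..y, g t :=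
      intervalIntegral.integral_mono_on_of_le_Ioo hy
        ((continuous_const.mul continuous_id).intervalIntegrable _ _) (hg.intervalIntegrable _ _)
        fun t ht => hlin t ⟨ht.1, ht.2.trans_le hyδ⟩

lemma mul_sq_div_two_le_integral_of_integral_lt {g : ℝ → ℝ} {c δ y : ℝ} (hg : Continuous g)
    (hnonneg : ∀ t, 0 ≤ t → 0 ≤ g t) (hlin : ∀ t ∈ Ioo 0 δ, c * t ≤ g t) (hδ : 0 ≤ δ)
    (hy : 0 ≤ y) (hsmall : ∫ t in (0)..y, g t < c * δ ^ 2 / 2) :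
    c * y ^ 2 / 2 ≤ ∫ t in (0)..y, g t := by
  refine mul_sq_div_two_le_integral hg hlin hy (le_of_not_gt fun hδy => hsmall.not_ge ?_)
  calc c * δ ^ 2 / 2 ≤ ∫ t in (0)..δ, g t := mul_sq_div_two_le_integral hg hlin hδ le_rfl
    _ ≤ ∫ t in (0)..y, g t :=
      intervalIntegral.integral_mono_interval le_rfl hδ hδy.le
        ((ae_restrict_iff' measurableSet_Ioc).2 (ae_of_all _ fun t ht => hnonneg t ht.1.le))
        (hg.intervalIntegrable _ _)

lemma abs_mul_le_sq_mul_add_sq_div {u v ρ : ℝ} (hρ : 0 < ρ) :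
    |u * v| ≤ (v ^ 2 * ρ + u ^ 2 / ρ) / 2 := by
  have hsq : v ^ 2 * ρ + u ^ 2 / ρ - 2 * (|u| * |v|) = (|v| * ρ - |u|) ^ 2 / ρ := by
    rw [← sq_abs u, ← sq_abs v]
    field_simp
    ring
  have : 0 ≤ (|v| * ρ - |u|) ^ 2 / ρ := by positivity
  rw [abs_mul]
  linarith

lemma abs_integral_le_flux {g φ ρ : ℝ → ℝ} {a b x : ℝ} (hg : Continuous g)
    (hφ : ContDiffOn ℝ 1 φ (Icc a b)) (hρ : ∀ s ∈ Ioo a b, 0 < ρ s)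
    (hφ' : IntegrableOn (fun s => deriv φ s ^ 2 * ρ s) (Ioo a b))
    (hgφ : IntegrableOn (fun s => g (φ s) ^ 2 / ρ s) (Ioo a b)) (hx : x ∈ Icc a b) :
    |∫ t in φ x..φ b, g t| ≤
      ((∫ s in Ioo a b, deriv φ s ^ 2 * ρ s) + ∫ s in Ioo a b, g (φ s) ^ 2 / ρ s) / 2 := by
  set F : ℝ → ℝ := fun s => g (φ s) * deriv φ s
  have hxb : Ioo x b ⊆ Ioo a b := Ioo_subset_Ioo_left hx.1
  have hbound : ∀ s ∈ Ioo a b, |F s| ≤ (deriv φ s ^ 2 * ρ s + g (φ s) ^ 2 / ρ s) / 2 :=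
    fun s hs => abs_mul_le_sq_mul_add_sq_div (hρ s hs)
  have hdom : IntegrableOn (fun s => (deriv φ s ^ 2 * ρ s + g (φ s) ^ 2 / ρ s) / 2) (Ioo a b) :=
    (hφ'.add hgφ).div_const 2
  have hF : IntegrableOn F (Ioo a b) := by
    refine hdom.mono' ?_ ?_
    · exact ((hg.comp_continuousOn (hφ.continuousOn.mono Ioo_subset_Icc_self)).aestronglyMeasurable
        measurableSet_Ioo).mul (measurable_deriv φ).aestronglyMeasurable
    · exact (ae_restrict_iff' measurableSet_Ioo).2 (ae_of_all _ hbound)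
  have hchange : ∫ s in x..b, F s = ∫ t in φ x..φ b, g t := by
    have hφc : ContinuousOn φ (uIcc x b) :=
      hφ.continuousOn.mono (uIcc_of_le hx.2 ▸ Icc_subset_Icc_left hx.1)
    refine intervalIntegral.integral_comp_mul_deriv''' hφc (fun s hs => ?_) hg.continuousOn
      (hg.continuousOn.integrableOn_compact (isCompact_uIcc.image_of_continuousOn hφc)) ?_
    · rw [min_eq_left hx.2, max_eq_right hx.2] at hs
      have hs' : s ∈ Ioo a b := hxb hs
      exact ((hφ.differentiableOn one_ne_zero).differentiableAt
        (Icc_mem_nhds hs'.1 hs'.2)).hasDerivAt.hasDerivWithinAt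
    · rw [uIcc_of_le hx.2, integrableOn_Icc_iff_integrableOn_Ioo]
      exact hF.mono_set hxb
  rw [← hchange]
  calc |∫ s in x..b, F s| ≤ ∫ s in Ioo x b, |F s| := by
        rw [intervalIntegral.integral_of_le hx.2, integral_Ioc_eq_integral_Ioo]
        exact abs_integral_le_integral_abs
    _ ≤ ∫ s in Ioo a b, |F s| :=
      setIntegral_mono_set hF.abs (ae_of_all _ fun _ => abs_nonneg _) hxb.eventuallyLE
    _ ≤ ∫ s in Ioo a b, (deriv φ s ^ 2 * ρ s + g (φ s) ^ 2 / ρ s) / 2 :=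
      setIntegral_mono_on hF.abs hdom measurableSet_Ioo hbound
    _ = _ := by rw [integral_div, integral_add hφ' hgφ]

theorem small_flux_pointwise_bound_general
    (g : ℝ → ℝ) (hg : ContDiff ℝ 1 g)
    (hg0 : deriv g 0 = 1)
    (hgpos : ∀ s : ℝ, 0 < s → 0 < g s) :
    ∃ ε₀ > (0:ℝ), ∃ C > (0:ℝ),
      ∀ ε : ℝ, 0 < ε → ε ≤ ε₀ →
      ∀ a b : ℝ, a < b →
      ∀ φ ρ : ℝ → ℝ,
        ContDiffOn ℝ 1 φ (Set.Icc a b) →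
        (∀ x ∈ Set.Icc a b, 0 ≤ φ x) →
        φ b = 0 →
        ContinuousOn ρ (Set.Ico a b) →
        (∀ x ∈ Set.Ico a b, 0 < ρ x) →
        IntegrableOn (fun s => (deriv φ s) ^ 2 * ρ s) (Set.Ioo a b) →
        (∫ s in Set.Ioo a b, (deriv φ s) ^ 2 * ρ s) ≤ ε →
        IntegrableOn (fun s => (g (φ s)) ^ 2 / ρ s) (Set.Ioo a b) →
        (∫ s in Set.Ioo a b, (g (φ s)) ^ 2 / ρ s) ≤ ε →
        ∀ x ∈ Set.Icc a b, φ x ≤ C * Real.sqrt ε := by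
  have hgc : Continuous g := hg.continuous
  have hg0_nonneg : 0 ≤ g 0 := ge_of_tendsto (hgc.continuousWithinAt (s := Ioi 0))
    (eventually_nhdsWithin_of_forall fun s hs => (hgpos s hs).le)
  have hnonneg : ∀ t, 0 ≤ t → 0 ≤ g t := fun t ht =>
    ht.eq_or_lt.elim (fun h => h ▸ hg0_nonneg) fun h => (hgpos t h).le
  obtain ⟨δ, hδ, hlin⟩ := exists_mul_le_of_hasDerivAt_zero
    (hg0 ▸ (hg.differentiable one_ne_zero 0).hasDerivAt) (by norm_num : (1 : ℝ) / 2 < 1)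
    hg0_nonneg
  refine ⟨δ ^ 2 / 8, by positivity, 2, two_pos, fun ε hε hεε₀ a b _ φ ρ hφ hφnn hφb _ hρ
    hI₁ hI₁ε hI₂ hI₂ε x hx => ?_⟩
  have hflux : ∫ t in (0)..φ x, g t ≤ ε := by
    have := abs_integral_le_flux hgc hφ (fun s hs => hρ s (Ioo_subset_Ico_self hs)) hI₁ hI₂ hx
    rw [hφb, intervalIntegral.integral_symm, abs_neg] at this
    linarith [le_abs_self (∫ t in (0)..φ x, g t)]
  have hsq : 1 / 2 * φ x ^ 2 / 2 ≤ ε :=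
    (mul_sq_div_two_le_integral_of_integral_lt hgc hnonneg hlin hδ.le (hφnn x hx)
      (by linarith)).trans hflux
  refine (pow_le_pow_iff_left₀ (hφnn x hx) (by positivity) two_ne_zero).1 ?_
  rw [mul_pow, Real.sq_sqrt hε.le]
  linarith

/-- Small-flux pointwise bound: under the Grillakis-type assumptions on `g`, there exist
`ε₀ > 0` and `C > 0`, depending only on `g`, such that whenever `0 < ε ≤ ε₀` and a
nonnegative C¹ profile `φ` on `[a,b]` vanishes at `b` and has both flux integrals bounded
by `ε` (with positive continuous weight `ρ` on `[a,b)`), one has `φ ≤ C√ε` on `[a,b]`. -/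
theorem small_flux_pointwise_bound
    (g : ℝ → ℝ) (hg : ContDiff ℝ 1 g)
    (hodd : ∀ s : ℝ, g (-s) = -g s)
    (hg0 : deriv g 0 = 1)
    (hgpos : ∀ s : ℝ, 0 < s → 0 < g s) :
    ∃ ε₀ > (0:ℝ), ∃ C > (0:ℝ),
      ∀ ε : ℝ, 0 < ε → ε ≤ ε₀ →
      ∀ a b : ℝ, a < b →
      ∀ φ ρ : ℝ → ℝ,
        ContDiffOn ℝ 1 φ (Set.Icc a b) →
        (∀ x ∈ Set.Icc a b, 0 ≤ φ x) →
        φ b = 0 →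
        ContinuousOn ρ (Set.Ico a b) →
        (∀ x ∈ Set.Ico a b, 0 < ρ x) →
        IntegrableOn (fun s => (deriv φ s) ^ 2 * ρ s) (Set.Ioo a b) →
        (∫ s in Set.Ioo a b, (deriv φ s) ^ 2 * ρ s) ≤ ε →
        IntegrableOn (fun s => (g (φ s)) ^ 2 / ρ s) (Set.Ioo a b) →
        (∫ s in Set.Ioo a b, (g (φ s)) ^ 2 / ρ s) ≤ ε →
        ∀ x ∈ Set.Icc a b, φ x ≤ C * Real.sqrt ε :=
  small_flux_pointwise_bound_general g hg hg0 hgpos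
end
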